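/- Let M = (R^4, g) with coordinates (x,y,z,xbar), where g(∂x,∂xbar) = g(∂y,∂y) = g(∂z,∂z) = 1 and g(∂x,∂z) = 2φ(y) for smooth φ. Then the Ricci operator satisfies rho(∂x) = -φ'' ∂z + 2(φ'φ' + φφ'') ∂xbar, rho(∂z) = -φ'' ∂xbar, rho(∂y) = rho(∂xbar) = 0, and rho^3 = 0; moreover, if φ''(y) ≠ 0, then rho^2 ≠ 0. -/

import Mathlib

noncomputable section

open Finset in
/-- Partial derivative in the `i`-th coordinate direction. -/
def pd {ι : Type*} [Fintype ι] [DecidableEq ι]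
    (i : ι) (f : (ι → ℝ) → ℝ) (p : ι → ℝ) : ℝ :=
  fderiv ℝ f p (Pi.single i 1)

/-- Christoffel symbols of the second kind `Γ^k_{ij}` of the metric `g`
(with inverse metric `ginv`). -/
def christoffel {ι : Type*} [Fintype ι] [DecidableEq ι]
    (g ginv : (ι → ℝ) → Matrix ι ι ℝ) (k i j : ι) (p : ι → ℝ) : ℝ :=
  (1 / 2) * ∑ l, ginv p k l *
    (pd i (fun q => g q j l) p + pd j (fun q => g q i l) p - pd l (fun q => g q i j) p)

/-- Components of the curvature operator of the Levi-Civita connection: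
`R(∂_i,∂_j)∂_k = ∑_l (curvOp g ginv i j k l) ∂_l`. -/
def curvOp {ι : Type*} [Fintype ι] [DecidableEq ι]
    (g ginv : (ι → ℝ) → Matrix ι ι ℝ) (i j k l : ι) (p : ι → ℝ) : ℝ :=
  pd i (christoffel g ginv l j k) p - pd j (christoffel g ginv l i k) p
    + ∑ m, christoffel g ginv l i m p * christoffel g ginv m j k p
    - ∑ m, christoffel g ginv l j m p * christoffel g ginv m i k p

/-- The curvature operator extended multilinearly to tangent vectors:
component `l` of `R(v,w)u`. -/
def curvVec {ι : Type*} [Fintype ι] [DecidableEq ι]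
    (g ginv : (ι → ℝ) → Matrix ι ι ℝ) (p : ι → ℝ) (v w u : ι → ℝ) : ι → ℝ :=
  fun l => ∑ i, ∑ j, ∑ k, v i * w j * u k * curvOp g ginv i j k l p

/-- The polarized Jacobi operator `J(v,w)u = (1/2){R(u,v)w + R(u,w)v}`. -/
def jacobiVec {ι : Type*} [Fintype ι] [DecidableEq ι]
    (g ginv : (ι → ℝ) → Matrix ι ι ℝ) (p : ι → ℝ) (v w u : ι → ℝ) : ι → ℝ :=
  fun l => (1 / 2) * (curvVec g ginv p u v w l + curvVec g ginv p u w v l)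

/-- The Ricci tensor `Ric_{ij} = Tr (z ↦ R(z,∂_i)∂_j)`. -/
def ricci {ι : Type*} [Fintype ι] [DecidableEq ι]
    (g ginv : (ι → ℝ) → Matrix ι ι ℝ) (i j : ι) (p : ι → ℝ) : ℝ :=
  ∑ m, curvOp g ginv m i j m p

/-- The Ricci operator (Ricci tensor with one index raised by `g`), as a matrix:
`rho(∂_j) = ∑_i (ricciOp p) i j ∂_i`. -/
def ricciOp {ι : Type*} [Fintype ι] [DecidableEq ι]
    (g ginv : (ι → ℝ) → Matrix ι ι ℝ) (p : ι → ℝ) : Matrix ι ι ℝ :=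
  fun i j => ∑ m, ginv p i m * ricci g ginv m j p

/-- The (0,4) curvature tensor `R_{ijkl} = g(R(∂_i,∂_j)∂_k, ∂_l)`. -/
def curv4 {ι : Type*} [Fintype ι] [DecidableEq ι]
    (g ginv : (ι → ℝ) → Matrix ι ι ℝ) (i j k l : ι) (p : ι → ℝ) : ℝ :=
  ∑ m, curvOp g ginv i j k m p * g p m l

/-- The metric of Theorem 1.3 on `ℝ⁴` with coordinates `(x, y, z, x̄)`:
`g(∂x,∂x̄) = g(∂y,∂y) = g(∂z,∂z) = 1`, `g(∂x,∂z) = 2φ(y)`. -/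
def gPhi (φ : ℝ → ℝ) (p : Fin 4 → ℝ) : Matrix (Fin 4) (Fin 4) ℝ :=
  Matrix.of
    ![![0, 0, 2 * φ (p 1), 1],
      ![0, 1, 0, 0],
      ![2 * φ (p 1), 0, 1, 0],
      ![1, 0, 0, 0]]


namespace Stmt13Aux

/-- Explicit inverse of `gPhi`. -/
def Gi (φ : ℝ → ℝ) (p : Fin 4 → ℝ) : Matrix (Fin 4) (Fin 4) ℝ :=
  Matrix.of
    ![![0, 0, 0, 1],
      ![0, 1, 0, 0],
      ![0, 0, 1, -(2 * φ (p 1))],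
      ![1, 0, -(2 * φ (p 1)), (2 * φ (p 1)) * (2 * φ (p 1))]]

lemma Gi_mul_g (φ : ℝ → ℝ) (p : Fin 4 → ℝ) : Gi φ p * gPhi φ p = 1 := by
  ext i j
  fin_cases i <;> fin_cases j <;>
    simp [Gi, gPhi, Matrix.mul_apply, Fin.sum_univ_four, Matrix.one_apply, Matrix.vecHead, Matrix.vecTail] <;> ring

lemma pd_affine (c k : ℝ) (f : ℝ → ℝ) (p : Fin 4 → ℝ)
    (hf : DifferentiableAt ℝ f (p 1)) (i : Fin 4) :
    pd i (fun q : Fin 4 → ℝ => c + k * f (q 1)) p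
      = if i = 1 then k * deriv f (p 1) else 0 := by
  have h1 : HasFDerivAt (fun q : Fin 4 → ℝ => q 1)
      (ContinuousLinearMap.proj 1 : (Fin 4 → ℝ) →L[ℝ] ℝ) p :=
    (ContinuousLinearMap.proj 1 : (Fin 4 → ℝ) →L[ℝ] ℝ).hasFDerivAt
  have h2 : HasFDerivAt (fun q : Fin 4 → ℝ => f (q 1))
      (deriv f (p 1) • (ContinuousLinearMap.proj 1 : (Fin 4 → ℝ) →L[ℝ] ℝ)) p :=
    hf.hasDerivAt.comp_hasFDerivAt p h1
  have h3 : HasFDerivAt (fun q : Fin 4 → ℝ => c + k * f (q 1))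
      ((k * deriv f (p 1)) • (ContinuousLinearMap.proj 1 : (Fin 4 → ℝ) →L[ℝ] ℝ)) p := by
    have h4 := (h2.const_mul k).const_add c
    refine h4.congr_fderiv ?_
    ext v
    simp [mul_comm, mul_assoc, mul_left_comm]
  rw [pd, h3.fderiv]
  rcases eq_or_ne i 1 with h | h
  · subst h; simp
  · simp [h, Pi.single_apply, Ne.symm h]

def gc : Matrix (Fin 4) (Fin 4) ℝ :=
  Matrix.of ![![0,0,0,1],![0,1,0,0],![0,0,1,0],![1,0,0,0]]
def gk : Matrix (Fin 4) (Fin 4) ℝ :=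
  Matrix.of ![![0,0,2,0],![0,0,0,0],![2,0,0,0],![0,0,0,0]]

lemma g_decomp (φ : ℝ → ℝ) (q : Fin 4 → ℝ) (j l : Fin 4) :
    gPhi φ q j l = gc j l + gk j l * φ (q 1) := by
  fin_cases j <;> fin_cases l <;> simp [gPhi, gc, gk, Matrix.vecHead, Matrix.vecTail] <;> ring

lemma pd_g (φ : ℝ → ℝ) (hφ : Differentiable ℝ φ) (i j l : Fin 4) (p : Fin 4 → ℝ) :
    pd i (fun q => gPhi φ q j l) p = if i = 1 then gk j l * deriv φ (p 1) else 0 := by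
  have he : (fun q : Fin 4 → ℝ => gPhi φ q j l)
      = fun q => gc j l + gk j l * φ (q 1) := funext fun q => g_decomp φ q j l
  rw [he, pd_affine _ _ _ _ (hφ _)]

def C1 : Fin 4 → Fin 4 → Fin 4 → ℝ :=
  ![![![0,0,0,0],![0,0,0,0],![0,0,0,0],![0,0,0,0]],
    ![![0,0,-1,0],![0,0,0,0],![-1,0,0,0],![0,0,0,0]],
    ![![0,1,0,0],![1,0,0,0],![0,0,0,0],![0,0,0,0]],
    ![![0,0,0,0],![0,0,1,0],![0,1,0,0],![0,0,0,0]]]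

def C2 : Fin 4 → Fin 4 → Fin 4 → ℝ :=
  ![![![0,0,0,0],![0,0,0,0],![0,0,0,0],![0,0,0,0]],
    ![![0,0,0,0],![0,0,0,0],![0,0,0,0],![0,0,0,0]],
    ![![0,0,0,0],![0,0,0,0],![0,0,0,0],![0,0,0,0]],
    ![![0,-2,0,0],![-2,0,0,0],![0,0,0,0],![0,0,0,0]]]

def chr (φ : ℝ → ℝ) (k i j : Fin 4) (y : ℝ) : ℝ :=
  C1 k i j * deriv φ y + C2 k i j * (φ y * deriv φ y)

set_option maxHeartbeats 4000000 in
lemma chris_eq (φ : ℝ → ℝ) (hφ : Differentiable ℝ φ) (k i j : Fin 4) (p : Fin 4 → ℝ) :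
    christoffel (gPhi φ) (Gi φ) k i j p = chr φ k i j (p 1) := by
  simp only [christoffel, Fin.sum_univ_four, pd_g φ hφ]
  fin_cases k <;> fin_cases i <;> fin_cases j <;>
    · norm_num [Gi, gk, chr, C1, C2, Matrix.vecHead, Matrix.vecTail, Fin.ext_iff, Matrix.cons_val]
      try simp
      try ring
      try (intro h; exact absurd h (by decide))

lemma chr_diff (φ : ℝ → ℝ) (hd : Differentiable ℝ φ) (hd' : Differentiable ℝ (deriv φ))
    (k i j : Fin 4) (y : ℝ) : DifferentiableAt ℝ (chr φ k i j) y :=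
  (((hd' y).const_mul _).add (((hd y).mul (hd' y)).const_mul _))

lemma deriv_chr (φ : ℝ → ℝ) (hd : Differentiable ℝ φ) (hd' : Differentiable ℝ (deriv φ))
    (k i j : Fin 4) (y : ℝ) :
    deriv (chr φ k i j) y = C1 k i j * deriv (deriv φ) y
      + C2 k i j * (deriv φ y * deriv φ y + φ y * deriv (deriv φ) y) := by
  unfold chr
  rw [deriv_fun_add (((hd' y).const_mul _)) ((((hd y).fun_mul (hd' y)).const_mul _)),
    deriv_const_mul _ (hd' y), deriv_const_mul _ ((hd y).fun_mul (hd' y)),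
    deriv_fun_mul (hd y) (hd' y)]
  try ring

lemma pd_chris (φ : ℝ → ℝ) (hd : Differentiable ℝ φ) (hd' : Differentiable ℝ (deriv φ))
    (m k i j : Fin 4) (p : Fin 4 → ℝ) :
    pd m (christoffel (gPhi φ) (Gi φ) k i j) p =
      if m = 1 then C1 k i j * deriv (deriv φ) (p 1)
        + C2 k i j * (deriv φ (p 1) * deriv φ (p 1) + φ (p 1) * deriv (deriv φ) (p 1))
      else 0 := by
  have he : (christoffel (gPhi φ) (Gi φ) k i j)
      = fun q : Fin 4 → ℝ => 0 + 1 * chr φ k i j (q 1) := by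
    funext q; rw [chris_eq φ hd]; ring
  rw [he, pd_affine _ _ _ _ (chr_diff φ hd hd' k i j _), deriv_chr φ hd hd']
  simp

set_option maxHeartbeats 4000000 in
lemma ricciOp_eq (φ : ℝ → ℝ) (hφ : ContDiff ℝ (⊤ : ℕ∞) φ) (p : Fin 4 → ℝ) :
    ricciOp (gPhi φ) (Gi φ) p =
      Matrix.of
        ![![0, 0, 0, 0],
          ![0, 0, 0, 0],
          ![-deriv (deriv φ) (p 1), 0, 0, 0],
          ![2 * (deriv φ (p 1) * deriv φ (p 1) + φ (p 1) * deriv (deriv φ) (p 1)),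
            0, -deriv (deriv φ) (p 1), 0]] := by
  have hd : Differentiable ℝ φ := hφ.differentiable (by simp)
  have hd' : Differentiable ℝ (deriv φ) :=
    ((contDiff_infty_iff_deriv.mp (hφ.of_le (by simp))).2).differentiable
      (by simp)
  ext i j
  fin_cases i <;> fin_cases j <;>
    · simp only [ricciOp, ricci, curvOp, Fin.sum_univ_four,
        pd_chris φ hd hd', chris_eq φ hd, chr]
      simp [Gi, C1, C2, Matrix.vecHead, Matrix.vecTail]
      try ring

end Stmt13Aux

open Stmt13Aux in
/-- For the metric `gPhi`, the Ricci operator satisfies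
`rho(∂x) = -φ''∂z + 2(φ'φ' + φφ'')∂x̄`, `rho(∂z) = -φ''∂x̄`,
`rho(∂y) = rho(∂x̄) = 0`; hence `rho³ = 0`, while `rho² ≠ 0` at points where
`φ''(y) ≠ 0`. -/
theorem stmt_13 (φ : ℝ → ℝ) (hφ : ContDiff ℝ (⊤ : ℕ∞) φ)
    (ginv : (Fin 4 → ℝ) → Matrix (Fin 4) (Fin 4) ℝ)
    (hginv : ∀ p, gPhi φ p * ginv p = 1 ∧ ginv p * gPhi φ p = 1) :
    ∀ p : Fin 4 → ℝ,
      ricciOp (gPhi φ) ginv p =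
        Matrix.of
          ![![0, 0, 0, 0],
            ![0, 0, 0, 0],
            ![-deriv (deriv φ) (p 1), 0, 0, 0],
            ![2 * (deriv φ (p 1) * deriv φ (p 1) + φ (p 1) * deriv (deriv φ) (p 1)),
              0, -deriv (deriv φ) (p 1), 0]] ∧
      ricciOp (gPhi φ) ginv p ^ 3 = 0 ∧
      (deriv (deriv φ) (p 1) ≠ 0 → ricciOp (gPhi φ) ginv p ^ 2 ≠ 0) := by
  have hg : ginv = Gi φ := by
    funext p
    have h2 := (hginv p).1
    calc ginv p = 1 * ginv p := (one_mul _).symm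
      _ = (Gi φ p * gPhi φ p) * ginv p := by rw [Gi_mul_g]
      _ = Gi φ p * (gPhi φ p * ginv p) := by rw [mul_assoc]
      _ = Gi φ p := by rw [h2, mul_one]
  subst hg
  intro p
  refine ⟨ricciOp_eq φ hφ p, ?_, ?_⟩
  · rw [ricciOp_eq φ hφ p]
    ext i j
    rw [pow_succ, pow_succ, pow_one]
    fin_cases i <;> fin_cases j <;>
      simp [Matrix.mul_apply, Fin.sum_univ_four, Matrix.vecHead, Matrix.vecTail]
  · intro hne h
    rw [ricciOp_eq φ hφ p] at h
    have h30 := congrFun (congrFun h 3) 0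
    rw [pow_two] at h30
    simp [Matrix.mul_apply, Fin.sum_univ_four, Matrix.vecHead, Matrix.vecTail] at h30
    exact hne (by nlinarith [h30])
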